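/- arXiv:1904.00189 — 10 statements merged into one kernel-verified Lean document; each statement's English description precedes it below -/
import Mathlib

section
/- Let (A, ≤_A) and (B, ≤_B) be linear orders and let R₁, R₂ ⊆ A × B be interval-preserving relations. Then the intersection R₁ ∩ R₂ is interval-preserving. -/
/-- An interval of a linear order: a set closed under betweenness. -/
def IsInterval {A : Type*} [LinearOrder A] (I : Set A) : Prop :=
  ∀ ⦃a b c : A⦄, a ∈ I → c ∈ I → a ≤ b → b ≤ c → b ∈ I

/-- A relation `R ⊆ A × B` between linear orders is interval-preserving if
the image of every interval of `A` is an interval of `(R(A), ≤_B)`, and the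
preimage of every interval of `B` is an interval of `(R⁻¹(B), ≤_A)`. -/
def IntervalPreserving {A B : Type*} [LinearOrder A] [LinearOrder B]
    (R : A → B → Prop) : Prop :=
  (∀ I : Set A, IsInterval I → ∀ b1 b b2 : B,
      (∃ a ∈ I, R a b1) → (∃ a ∈ I, R a b2) → (∃ a, R a b) →
      b1 ≤ b → b ≤ b2 → ∃ a ∈ I, R a b) ∧
  (∀ J : Set B, IsInterval J → ∀ a1 a a2 : A,
      (∃ b ∈ J, R a1 b) → (∃ b ∈ J, R a2 b) → (∃ b, R a b) →
      a1 ≤ a → a ≤ a2 → ∃ b ∈ J, R a b)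

lemma isInterval_singleton {B : Type*} [LinearOrder B] (b : B) :
    IsInterval ({b} : Set B) := by
  intro x y z hx hz hxy hyz
  simp only [Set.mem_singleton_iff] at *
  subst hx; subst hz
  exact le_antisymm hyz hxy

/-- Key lemma: the image direction for the intersection, from both directions
for the two relations. -/
lemma key {A B : Type*} [LinearOrder A] [LinearOrder B] (R1 R2 : A → B → Prop)
    (h1 : ∀ I : Set A, IsInterval I → ∀ b1 b b2 : B,
      (∃ a ∈ I, R1 a b1) → (∃ a ∈ I, R1 a b2) → (∃ a, R1 a b) →
      b1 ≤ b → b ≤ b2 → ∃ a ∈ I, R1 a b)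
    (h1' : ∀ J : Set B, IsInterval J → ∀ a1 a a2 : A,
      (∃ b ∈ J, R1 a1 b) → (∃ b ∈ J, R1 a2 b) → (∃ b, R1 a b) →
      a1 ≤ a → a ≤ a2 → ∃ b ∈ J, R1 a b)
    (h2 : ∀ I : Set A, IsInterval I → ∀ b1 b b2 : B,
      (∃ a ∈ I, R2 a b1) → (∃ a ∈ I, R2 a b2) → (∃ a, R2 a b) →
      b1 ≤ b → b ≤ b2 → ∃ a ∈ I, R2 a b)
    (h2' : ∀ J : Set B, IsInterval J → ∀ a1 a a2 : A,
      (∃ b ∈ J, R2 a1 b) → (∃ b ∈ J, R2 a2 b) → (∃ b, R2 a b) →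
      a1 ≤ a → a ≤ a2 → ∃ b ∈ J, R2 a b) :
    ∀ I : Set A, IsInterval I → ∀ b1 b b2 : B,
      (∃ a ∈ I, R1 a b1 ∧ R2 a b1) → (∃ a ∈ I, R1 a b2 ∧ R2 a b2) →
      (∃ a, R1 a b ∧ R2 a b) →
      b1 ≤ b → b ≤ b2 → ∃ a ∈ I, R1 a b ∧ R2 a b := by
  intro I hI b1 b b2 hw1 hw2 hw hb1 hb2
  obtain ⟨a1, ha1I, ha1b1, ha1b1'⟩ := hw1
  obtain ⟨a2, ha2I, ha2b2, ha2b2'⟩ := hw2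
  obtain ⟨a0, ha0, ha0'⟩ := hw
  set m := min a1 a2 with hm
  set M := max a1 a2 with hM
  -- facts about the endpoints
  have hmI : m ∈ I := by rcases min_cases a1 a2 with ⟨h, _⟩ | ⟨h, _⟩ <;> rw [hm, h] <;> assumption
  have hMI : M ∈ I := by rcases max_cases a1 a2 with ⟨h, _⟩ | ⟨h, _⟩ <;> rw [hM, h] <;> assumption
  have hm1 : ∃ y, R1 m y := by
    rcases min_cases a1 a2 with ⟨h, _⟩ | ⟨h, _⟩ <;> rw [hm, h] <;> exact ⟨_, by assumption⟩
  have hm2 : ∃ y, R2 m y := by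
    rcases min_cases a1 a2 with ⟨h, _⟩ | ⟨h, _⟩ <;> rw [hm, h] <;> exact ⟨_, by assumption⟩
  have hM1 : ∃ y, R1 M y := by
    rcases max_cases a1 a2 with ⟨h, _⟩ | ⟨h, _⟩ <;> rw [hM, h] <;> exact ⟨_, by assumption⟩
  have hM2 : ∃ y, R2 M y := by
    rcases max_cases a1 a2 with ⟨h, _⟩ | ⟨h, _⟩ <;> rw [hM, h] <;> exact ⟨_, by assumption⟩
  -- the restricted interval
  set I' : Set A := I ∩ Set.Icc m M with hI'
  have hI'int : IsInterval I' := by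
    intro p q r hp hr hpq hqr
    exact ⟨hI hp.1 hr.1 hpq hqr, le_trans hp.2.1 hpq, le_trans hqr hr.2.2⟩
  have ha1I' : a1 ∈ I' := ⟨ha1I, min_le_left _ _, le_max_left _ _⟩
  have ha2I' : a2 ∈ I' := ⟨ha2I, min_le_right _ _, le_max_right _ _⟩
  obtain ⟨a', ha'I', ha'b⟩ :=
    h1 I' hI'int b1 b b2 ⟨a1, ha1I', ha1b1⟩ ⟨a2, ha2I', ha2b2⟩ ⟨a0, ha0⟩ hb1 hb2
  obtain ⟨a'', ha''I', ha''b⟩ :=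
    h2 I' hI'int b1 b b2 ⟨a1, ha1I', ha1b1'⟩ ⟨a2, ha2I', ha2b2'⟩ ⟨a0, ha0'⟩ hb1 hb2
  rcases le_total a0 m with h0m | hm0
  · -- endpoint m works
    obtain ⟨y, hy, hy'⟩ := h1' {b} (isInterval_singleton b) a0 m a'
      ⟨b, rfl, ha0⟩ ⟨b, rfl, ha'b⟩ hm1 h0m ha'I'.2.1
    obtain ⟨z, hz, hz'⟩ := h2' {b} (isInterval_singleton b) a0 m a''
      ⟨b, rfl, ha0'⟩ ⟨b, rfl, ha''b⟩ hm2 h0m ha''I'.2.1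
    rw [Set.mem_singleton_iff] at hy hz
    subst hy; subst hz
    exact ⟨m, hmI, hy', hz'⟩
  · rcases le_total a0 M with h0M | hM0
    · -- a0 itself lies in I
      exact ⟨a0, hI hmI hMI hm0 h0M, ha0, ha0'⟩
    · -- endpoint M works
      obtain ⟨y, hy, hy'⟩ := h1' {b} (isInterval_singleton b) a' M a0
        ⟨b, rfl, ha'b⟩ ⟨b, rfl, ha0⟩ hM1 ha'I'.2.2 hM0
      obtain ⟨z, hz, hz'⟩ := h2' {b} (isInterval_singleton b) a'' M a0
        ⟨b, rfl, ha''b⟩ ⟨b, rfl, ha0'⟩ hM2 ha''I'.2.2 hM0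
      rw [Set.mem_singleton_iff] at hy hz
      subst hy; subst hz
      exact ⟨M, hMI, hy', hz'⟩

theorem inter_intervalPreserving {A B : Type*} [LinearOrder A] [LinearOrder B]
    (R1 R2 : A → B → Prop) (h1 : IntervalPreserving R1) (h2 : IntervalPreserving R2) :
    IntervalPreserving (fun a b => R1 a b ∧ R2 a b) := by
  exact ⟨key R1 R2 h1.1 h1.2 h2.1 h2.2,
    key (fun b a => R1 a b) (fun b a => R2 a b) h1.2 h1.1 h2.2 h2.1⟩
end

section
/- Let (A, ≤_A), (B, ≤_B), (C, ≤_C) be linear orders, let R₁ ⊆ A × B and R₂ ⊆ B × C be interval-preserving relations. Then the composition R₁ · R₂ = {(a,c) : ∃ b ∈ B, (a,b) ∈ R₁ ∧ (b,c) ∈ R₂} is interval-preserving. -/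
lemma singleton_isInterval {C : Type*} [LinearOrder C] (c : C) :
    IsInterval ({c} : Set C) := by
  intro x y z hx hz hxy hyz
  simp only [Set.mem_singleton_iff] at *
  subst hx; subst hz
  exact le_antisymm hyz hxy

lemma icc_isInterval {B : Type*} [LinearOrder B] (p q : B) :
    IsInterval (Set.Icc p q) := fun _ _ _ hx hz hxy hyz =>
  ⟨le_trans hx.1 hxy, le_trans hyz hz.2⟩

lemma comp_fwd {A B C : Type*}
    [LinearOrder A] [LinearOrder B] [LinearOrder C]
    (R1 : A → B → Prop) (R2 : B → C → Prop)
    (h1 : IntervalPreserving R1) (h2 : IntervalPreserving R2) :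
    ∀ I : Set A, IsInterval I → ∀ c1 c c2 : C,
      (∃ a ∈ I, ∃ b, R1 a b ∧ R2 b c1) → (∃ a ∈ I, ∃ b, R1 a b ∧ R2 b c2) →
      (∃ a, ∃ b, R1 a b ∧ R2 b c) → c1 ≤ c → c ≤ c2 →
      ∃ a ∈ I, ∃ b, R1 a b ∧ R2 b c := by
  rintro I hI c1 c c2 ⟨a1, ha1, b1, hab1, hbc1⟩ ⟨a2, ha2, b2, hab2, hbc2⟩
    ⟨a0, b0, hab0, hbc0⟩ hc1 hc2
  suffices H : ∀ p q : B, p ≤ q → (∃ a ∈ I, R1 a p) → (∃ a ∈ I, R1 a q) →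
      (∃ c', R2 p c') → (∃ c', R2 q c') →
      (∃ b ∈ Set.Icc p q, R2 b c) → ∃ a ∈ I, ∃ b, R1 a b ∧ R2 b c by
    rcases le_total b1 b2 with hb | hb
    · refine H b1 b2 hb ⟨a1, ha1, hab1⟩ ⟨a2, ha2, hab2⟩ ⟨c1, hbc1⟩ ⟨c2, hbc2⟩ ?_
      exact h2.1 (Set.Icc b1 b2) (icc_isInterval b1 b2) c1 c c2
        ⟨b1, ⟨le_refl _, hb⟩, hbc1⟩ ⟨b2, ⟨hb, le_refl _⟩, hbc2⟩ ⟨b0, hbc0⟩ hc1 hc2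
    · refine H b2 b1 hb ⟨a2, ha2, hab2⟩ ⟨a1, ha1, hab1⟩ ⟨c2, hbc2⟩ ⟨c1, hbc1⟩ ?_
      exact h2.1 (Set.Icc b2 b1) (icc_isInterval b2 b1) c1 c c2
        ⟨b1, ⟨hb, le_refl _⟩, hbc1⟩ ⟨b2, ⟨le_refl _, hb⟩, hbc2⟩ ⟨b0, hbc0⟩ hc1 hc2
  rintro p q hpq hp hq hpc hqc ⟨b, ⟨hpb, hbq⟩, hbc⟩
  by_cases hb : ∃ a, R1 a b
  · obtain ⟨a, ha, hab⟩ := h1.1 I hI p b q hp hq hb hpb hbq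
    exact ⟨a, ha, b, hab, hbc⟩
  · rcases le_or_gt p b0 with h0p | h0p
    · rcases le_or_gt b0 q with h0q | h0q
      · obtain ⟨a, ha, hab⟩ := h1.1 I hI p b0 q hp hq ⟨a0, hab0⟩ h0p h0q
        exact ⟨a, ha, b0, hab, hbc0⟩
      · -- b ≤ q ≤ b0
        obtain ⟨c', hc', hqc'⟩ := h2.2 {c} (singleton_isInterval c) b q b0
          ⟨c, rfl, hbc⟩ ⟨c, rfl, hbc0⟩ hqc hbq (le_of_lt h0q)
        obtain ⟨a, ha, haq⟩ := hq
        rw [Set.mem_singleton_iff] at hc'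
        subst hc'
        exact ⟨a, ha, q, haq, hqc'⟩
    · -- b0 ≤ p ≤ b
      obtain ⟨c', hc', hpc'⟩ := h2.2 {c} (singleton_isInterval c) b0 p b
        ⟨c, rfl, hbc0⟩ ⟨c, rfl, hbc⟩ hpc (le_of_lt h0p) hpb
      obtain ⟨a, ha, hap⟩ := hp
      rw [Set.mem_singleton_iff] at hc'
      subst hc'
      exact ⟨a, ha, p, hap, hpc'⟩

theorem comp_intervalPreserving {A B C : Type*}
    [LinearOrder A] [LinearOrder B] [LinearOrder C]
    (R1 : A → B → Prop) (R2 : B → C → Prop)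
    (h1 : IntervalPreserving R1) (h2 : IntervalPreserving R2) :
    IntervalPreserving (fun a c => ∃ b, R1 a b ∧ R2 b c) := by
  constructor
  · exact comp_fwd R1 R2 h1 h2
  · intro J hJ a1 a a2 ha1 ha2 ha hle1 hle2
    have key := comp_fwd (fun c b => R2 b c) (fun b a => R1 a b)
      ⟨h2.2, h2.1⟩ ⟨h1.2, h1.1⟩ J hJ a1 a a2
      (by obtain ⟨c, hc, b, hab, hbc⟩ := ha1; exact ⟨c, hc, b, hbc, hab⟩)
      (by obtain ⟨c, hc, b, hab, hbc⟩ := ha2; exact ⟨c, hc, b, hbc, hab⟩)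
      (by obtain ⟨c0, b, hab, hbc⟩ := ha; exact ⟨c0, b, hbc, hab⟩)
      hle1 hle2
    obtain ⟨c, hc, b, hbc, hab⟩ := key
    exact ⟨c, hc, b, hab, hbc⟩
end

section
/- Let (A, ≤) be a linear order and let P, Q ⊆ A. Then the 'until' relation until_{P,Q} = {(a,b) ∈ A × A : a < b ∧ b ∈ Q ∧ ∀ c, a < c < b → c ∈ P} is interval-preserving. -/
theorem until_intervalPreserving {A : Type*} [LinearOrder A] (P Q : Set A) :
    IntervalPreserving (fun a b => a < b ∧ b ∈ Q ∧ ∀ c, a < c → c < b → c ∈ P) := by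
  constructor
  · rintro I hI b1 b b2 ⟨a1, ha1I, ha1b1, hb1Q, hP1⟩ ⟨a2, ha2I, ha2b2, hb2Q, hP2⟩
      ⟨a, hab, hbQ, hPa⟩ hb1b hbb2
    rcases lt_trichotomy a a1 with h | h | h
    · -- a < a1 : witness a1
      refine ⟨a1, ha1I, lt_of_lt_of_le ha1b1 hb1b, hbQ, fun c hc1 hcb => ?_⟩
      rcases lt_or_ge c b1 with hcb1 | hb1c
      · exact hP1 c hc1 hcb1
      · exact hPa c (h.trans (lt_of_lt_of_le ha1b1 hb1c)) hcb
    · exact ⟨a1, ha1I, h ▸ hab, hbQ, h ▸ hPa⟩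
    · rcases le_or_gt a a2 with h2 | h2
      · exact ⟨a, hI ha1I ha2I h.le h2, hab, hbQ, hPa⟩
      · -- a2 < a : witness a2
        refine ⟨a2, ha2I, h2.trans hab, hbQ, fun c hc2 hcb => ?_⟩
        exact hP2 c hc2 (lt_of_lt_of_le hcb hbb2)
  · rintro J hJ a1 a a2 ⟨b1, hb1J, ha1b1, hb1Q, hP1⟩ ⟨b2, hb2J, ha2b2, hb2Q, hP2⟩
      ⟨b, hab, hbQ, hPa⟩ ha1a haa2
    rcases lt_trichotomy b b1 with h | h | h
    · -- b < b1 : witness b1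
      refine ⟨b1, hb1J, hab.trans h, hb1Q, fun c hac hcb1 => ?_⟩
      exact hP1 c (lt_of_le_of_lt ha1a hac) hcb1
    · exact ⟨b1, hb1J, h ▸ hab, h ▸ hbQ, h ▸ hPa⟩
    · rcases le_or_gt b b2 with h2 | h2
      · exact ⟨b, hJ hb1J hb2J h.le h2, hab, hbQ, hPa⟩
      · -- b2 < b : witness b2
        refine ⟨b2, hb2J, lt_of_le_of_lt haa2 ha2b2, hb2Q, fun c hac hcb2 => ?_⟩
        exact hPa c hac (hcb2.trans h2)
end

section
/- Let (A, ≤_A) and (B, ≤_B) be linear orders and let R ⊆ A × B be an interval-preserving relation. Then the relation c1(R) = {(a,b) : R(a) ≠ ∅ ∧ b < R(a) ∧ R⁻¹(b) ≠ ∅ ∧ a < R⁻¹(b)} is interval-preserving. -/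
/-- `c1(R) = {(a,b) : R(a) ≠ ∅ ∧ b < R(a) ∧ R⁻¹(b) ≠ ∅ ∧ a < R⁻¹(b)}`. -/
def c1 {A B : Type*} [LinearOrder A] [LinearOrder B] (R : A → B → Prop)
    (a : A) (b : B) : Prop :=
  (∃ b', R a b') ∧ (∀ b', R a b' → b < b') ∧
  (∃ a', R a' b) ∧ (∀ a', R a' b → a < a')

/-- `c2(R) = {(a,b) : R(a) ≠ ∅ ∧ b < R(a) ∧ R⁻¹(b) ≠ ∅ ∧ R⁻¹(b) < a}`. -/
def c2 {A B : Type*} [LinearOrder A] [LinearOrder B] (R : A → B → Prop)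
    (a : A) (b : B) : Prop :=
  (∃ b', R a b') ∧ (∀ b', R a b' → b < b') ∧
  (∃ a', R a' b) ∧ (∀ a', R a' b → a' < a)

/-- `c3(R) = {(a,b) : R(a) ≠ ∅ ∧ R(a) < b ∧ R⁻¹(b) ≠ ∅ ∧ a < R⁻¹(b)}`. -/
def c3 {A B : Type*} [LinearOrder A] [LinearOrder B] (R : A → B → Prop)
    (a : A) (b : B) : Prop :=
  (∃ b', R a b') ∧ (∀ b', R a b' → b' < b) ∧
  (∃ a', R a' b) ∧ (∀ a', R a' b → a < a')

/-- `c4(R) = {(a,b) : R(a) ≠ ∅ ∧ R(a) < b ∧ R⁻¹(b) ≠ ∅ ∧ R⁻¹(b) < a}`. -/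
def c4 {A B : Type*} [LinearOrder A] [LinearOrder B] (R : A → B → Prop)
    (a : A) (b : B) : Prop :=
  (∃ b', R a b') ∧ (∀ b', R a b' → b' < b) ∧
  (∃ a', R a' b) ∧ (∀ a', R a' b → a' < a)

/-- Key lemma: if `c1 R a2 b2` and `b ≤ b2`, then `a2 < R⁻¹(b)`. -/
lemma c1_key_left {A B : Type*} [LinearOrder A] [LinearOrder B]
    (R : A → B → Prop) (hR : IntervalPreserving R)
    {a2 : A} {b2 : B} (h : c1 R a2 b2) {b : B} (hb : b ≤ b2)
    {x : A} (hx : R x b) : a2 < x := by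
  by_contra hlt
  push_neg at hlt
  obtain ⟨hdom, hupper, ⟨a'', ha''⟩, hright⟩ := h
  obtain ⟨y, hy, hRy⟩ := hR.2 (Set.Iic b2)
    (fun p q r _ hr _ h2 => le_trans h2 hr) x a2 a''
    ⟨b, hb, hx⟩ ⟨b2, le_refl _, ha''⟩ hdom hlt (le_of_lt (hright a'' ha''))
  exact absurd hy (not_le.mpr (hupper y hRy))

/-- Dual key lemma: if `c1 R a2 b2` and `a ≤ a2`, then `b2 < R(a)`. -/
lemma c1_key_right {A B : Type*} [LinearOrder A] [LinearOrder B]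
    (R : A → B → Prop) (hR : IntervalPreserving R)
    {a2 : A} {b2 : B} (h : c1 R a2 b2) {a : A} (ha : a ≤ a2)
    {y : B} (hy : R a y) : b2 < y := by
  by_contra hlt
  push_neg at hlt
  obtain ⟨⟨z, hz⟩, hupper, hran, hright⟩ := h
  obtain ⟨x, hx, hRx⟩ := hR.1 (Set.Iic a2)
    (fun p q r _ hr _ h2 => le_trans h2 hr) y b2 z
    ⟨a, ha, hy⟩ ⟨a2, le_refl _, hz⟩ hran hlt (le_of_lt (hupper z hz))
  exact absurd hx (not_le.mpr (hright x hRx))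

theorem c1_intervalPreserving {A B : Type*} [LinearOrder A] [LinearOrder B]
    (R : A → B → Prop) (hR : IntervalPreserving R) :
    IntervalPreserving (c1 R) := by
  constructor
  · intro I _ b1 b b2 _ ⟨a2, ha2I, hc2⟩ ⟨astar, hstar⟩ hb1 hb2
    refine ⟨a2, ha2I, hc2.1, fun b' hb' => lt_of_le_of_lt hb2 (hc2.2.1 b' hb'),
      hstar.2.2.1, fun x hx => c1_key_left R hR hc2 hb2 hx⟩
  · intro J _ a1 a a2 _ ⟨b2, hb2J, hc2⟩ ⟨bstar, hstar⟩ _ ha2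
    refine ⟨b2, hb2J, hstar.1,
      fun y hy => c1_key_right R hR hc2 ha2 hy,
      hc2.2.2.1, fun a' ha' => lt_of_le_of_lt ha2 (hc2.2.2.2 a' ha')⟩
end

section
/- Let (A, ≤_A) and (B, ≤_B) be linear orders and let R ⊆ A × B be an interval-preserving relation. Then the relation c2(R) = {(a,b) : R(a) ≠ ∅ ∧ b < R(a) ∧ R⁻¹(b) ≠ ∅ ∧ R⁻¹(b) < a} is interval-preserving. -/
theorem c2_intervalPreserving {A B : Type*} [LinearOrder A] [LinearOrder B]
    (R : A → B → Prop) (hR : IntervalPreserving R) :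
    IntervalPreserving (c2 R) := by
  have hIcc : ∀ (x y : B), IsInterval (Set.Icc x y) :=
    fun x y a b c ha hc hab hbc => ⟨le_trans ha.1 hab, le_trans hbc hc.2⟩
  have hIccA : ∀ (x y : A), IsInterval (Set.Icc x y) :=
    fun x y a b c ha hc hab hbc => ⟨le_trans ha.1 hab, le_trans hbc hc.2⟩
  constructor
  · rintro I hI b1 b b2 ⟨a1, ha1I, ha1⟩ ⟨a2, ha2I, ha2⟩ ⟨a0, ha0⟩ hb1 hb2
    obtain ⟨⟨b2', hb2'⟩, h2lt, ⟨a2', ha2'⟩, h2lt'⟩ := ha2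
    obtain ⟨_, _, ⟨a0', ha0'⟩, _⟩ := ha0
    refine ⟨a2, ha2I, ⟨b2', hb2'⟩, fun b' h => lt_of_le_of_lt hb2 (h2lt b' h),
      ⟨a0', ha0'⟩, ?_⟩
    intro a' ha'
    by_contra hcon
    push_neg at hcon
    obtain ⟨y, ⟨hyb, hyb2⟩, hy⟩ :=
      hR.2 (Set.Icc b b2) (hIcc b b2) a2' a2 a'
        ⟨b2, ⟨hb2, le_refl b2⟩, ha2'⟩ ⟨b, ⟨le_refl b, hb2⟩, ha'⟩
        ⟨b2', hb2'⟩ (le_of_lt (h2lt' a2' ha2')) hcon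
    exact absurd (h2lt y hy) (not_lt.2 hyb2)
  · rintro J hJ a1 a a2 ⟨b1, hb1J, hb1⟩ ⟨b2, hb2J, hb2⟩ ⟨b0, hb0⟩ ha1 ha2
    obtain ⟨⟨b1', hb1'⟩, h1lt, ⟨a1', ha1'⟩, h1lt'⟩ := hb1
    obtain ⟨⟨b0', hb0'⟩, _, _, _⟩ := hb0
    refine ⟨b1, hb1J, ⟨b0', hb0'⟩, ?_, ⟨a1', ha1'⟩,
      fun a' h => lt_of_lt_of_le (h1lt' a' h) ha1⟩
    intro b' h
    by_contra hcon
    push_neg at hcon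
    obtain ⟨x, ⟨hx1, hx2⟩, hx⟩ :=
      hR.1 (Set.Icc a1 a) (hIccA a1 a) b' b1 b1'
        ⟨a, ⟨ha1, le_refl a⟩, h⟩ ⟨a1, ⟨le_refl a1, ha1⟩, hb1'⟩
        ⟨a1', ha1'⟩ hcon (le_of_lt (h1lt b1' hb1'))
    exact absurd (h1lt' x hx) (not_lt.2 hx1)
end

section
/- Let (A, ≤_A) and (B, ≤_B) be linear orders and let R ⊆ A × B be an interval-preserving relation. Then the relation c3(R) = {(a,b) : R(a) ≠ ∅ ∧ R(a) < b ∧ R⁻¹(b) ≠ ∅ ∧ a < R⁻¹(b)} is interval-preserving. -/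
lemma c3_aux1 {A B : Type*} [LinearOrder A] [LinearOrder B]
    {R : A → B → Prop} (hR : IntervalPreserving R) {a2 : A} {b2 : B}
    (h : c3 R a2 b2) {a' : A} {b' : B} (hle : a' ≤ a2) (hr : R a' b') :
    b' < b2 := by
  by_contra hc
  push_neg at hc
  obtain ⟨⟨b0, hb0⟩, hlt, ⟨a0, ha0⟩, hgt⟩ := h
  obtain ⟨x, hx, hxb⟩ := hR.1 {x | x ≤ a2}
    (fun a b c ha hc hab hbc => le_trans hbc hc) b0 b2 b'
    ⟨a2, le_refl _, hb0⟩ ⟨a', hle, hr⟩ ⟨a0, ha0⟩ (hlt b0 hb0).le hc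
  exact absurd hx (not_le.mpr (hgt x hxb))

lemma c3_aux2 {A B : Type*} [LinearOrder A] [LinearOrder B]
    {R : A → B → Prop} (hR : IntervalPreserving R) {a1 : A} {b1 : B}
    (h : c3 R a1 b1) {a'' : A} {b'' : B} (hle : b1 ≤ b'') (hr : R a'' b'') :
    a1 < a'' := by
  by_contra hc
  push_neg at hc
  obtain ⟨⟨b0, hb0⟩, hlt, ⟨a0, ha0⟩, hgt⟩ := h
  obtain ⟨y, hy, hay⟩ := hR.2 {y | b1 ≤ y}
    (fun a b c ha hc hab hbc => le_trans ha hab) a'' a1 a0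
    ⟨b'', hle, hr⟩ ⟨b1, le_refl _, ha0⟩ ⟨b0, hb0⟩ hc (hgt a0 ha0).le
  exact absurd hy (not_le.mpr (hlt y hay))

theorem c3_intervalPreserving {A B : Type*} [LinearOrder A] [LinearOrder B]
    (R : A → B → Prop) (hR : IntervalPreserving R) :
    IntervalPreserving (c3 R) := by
  constructor
  · rintro I hI b1 b b2 ⟨a1, ha1I, hc1⟩ ⟨a2, ha2I, hc2⟩ ⟨a0, hc0⟩ hb1b hbb2
    refine ⟨a1, ha1I, hc1.1, ?_, hc0.2.2.1, ?_⟩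
    · intro b' hb'
      exact lt_of_lt_of_le (hc1.2.1 b' hb') hb1b
    · intro a' ha'
      exact c3_aux2 hR hc1 hb1b ha'
  · rintro J hJ a1 a a2 ⟨b1, hb1J, hc1⟩ ⟨b2, hb2J, hc2⟩ ⟨b, hc⟩ ha1a haa2
    refine ⟨b2, hb2J, hc.1, ?_, hc2.2.2.1, ?_⟩
    · intro b' hb'
      exact c3_aux1 hR hc2 haa2 hb'
    · intro a' ha'
      exact lt_of_le_of_lt haa2 (hc2.2.2.2 a' ha')
end

section
/- Let (A, ≤_A) and (B, ≤_B) be linear orders and let R ⊆ A × B be an interval-preserving relation. Then the relation c4(R) = {(a,b) : R(a) ≠ ∅ ∧ R(a) < b ∧ R⁻¹(b) ≠ ∅ ∧ R⁻¹(b) < a} is interval-preserving. -/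
theorem c4_intervalPreserving {A B : Type*} [LinearOrder A] [LinearOrder B]
    (R : A → B → Prop) (hR : IntervalPreserving R) :
    IntervalPreserving (c4 R) := by
  constructor
  · rintro I hI b1 b b2 ⟨a1, ha1I, h1⟩ _ ⟨a0, h0⟩ hb1b hbb2
    obtain ⟨⟨u, hu⟩, hlt, ⟨v, hv⟩, hvlt⟩ := h1
    obtain ⟨_, _, ⟨a', ha'⟩, _⟩ := h0
    refine ⟨a1, ha1I, ⟨u, hu⟩, fun b' hb' => lt_of_lt_of_le (hlt b' hb') hb1b,
      ⟨a', ha'⟩, fun x hx => ?_⟩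
    by_contra hle
    push_neg at hle
    have hint : IsInterval (Set.Ici b1) := fun p q r hp _ hpq _ => le_trans hp hpq
    obtain ⟨w, hw1, hw2⟩ := hR.2 (Set.Ici b1) hint v a1 x
      ⟨b1, le_refl b1, hv⟩ ⟨b, hb1b, hx⟩ ⟨u, hu⟩ (le_of_lt (hvlt v hv)) hle
    exact absurd hw1 (not_le.mpr (hlt w hw2))
  · rintro J hJ a1 a a2 ⟨b1, hb1J, h1⟩ _ ⟨b0, h0⟩ ha1a haa2
    obtain ⟨⟨u, hu⟩, hlt, ⟨v, hv⟩, hvlt⟩ := h1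
    obtain ⟨⟨b', hb'⟩, _, _, _⟩ := h0
    refine ⟨b1, hb1J, ⟨b', hb'⟩, fun y hy => ?_,
      ⟨v, hv⟩, fun x hx => lt_of_lt_of_le (hvlt x hx) ha1a⟩
    by_contra hle
    push_neg at hle
    have hint : IsInterval (Set.Ici a1) := fun p q r hp _ hpq _ => le_trans hp hpq
    obtain ⟨w, hw1, hw2⟩ := hR.1 (Set.Ici a1) hint u b1 y
      ⟨a1, le_refl a1, hu⟩ ⟨a, ha1a, hy⟩ ⟨v, hv⟩ (le_of_lt (hlt u hu)) hle
    exact absurd hw1 (not_le.mpr (hvlt w hw2))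
end

section
/- Let (A, ≤_A) and (B, ≤_B) be linear orders, let R ⊆ A × B be an interval-preserving relation, and suppose (a₂, b₂) ∈ c2(R), b ≤_B b₂, and R⁻¹(b) ≠ ∅. Then (a₂, b) ∈ c2(R). -/
theorem c2_left_closed {A B : Type*} [LinearOrder A] [LinearOrder B]
    (R : A → B → Prop) (hR : IntervalPreserving R)
    (a₂ : A) (b b₂ : B) (h : c2 R a₂ b₂) (hb : b ≤ b₂) (hne : ∃ a, R a b) :
    c2 R a₂ b := by
  obtain ⟨⟨b', hb'⟩, h2, ⟨a', ha'⟩, h4⟩ := h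
  refine ⟨⟨b', hb'⟩, fun b'' hb'' => lt_of_le_of_lt hb (h2 _ hb''), hne, ?_⟩
  intro a hab
  by_contra hlt
  push_neg at hlt
  obtain ⟨b'', hb''J, hb''⟩ := hR.2 (Set.Iic b₂) (fun x y z hx hz _ hyz => le_trans hyz hz)
    a' a₂ a ⟨b₂, le_refl _, ha'⟩ ⟨b, hb, hab⟩ ⟨b', hb'⟩ (le_of_lt (h4 a' ha')) hlt
  exact absurd hb''J (not_le.mpr (h2 _ hb''))
end

section
/- Let (A, ≤_A) and (B, ≤_B) be linear orders, let R ⊆ A × B be an interval-preserving relation, and suppose (a₁, b₁) ∈ c4(R), b₁ ≤_B b, and R⁻¹(b) ≠ ∅. Then (a₁, b) ∈ c4(R). -/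
theorem c4_right_closed {A B : Type*} [LinearOrder A] [LinearOrder B]
    (R : A → B → Prop) (hR : IntervalPreserving R)
    (a₁ : A) (b₁ b : B) (h : c4 R a₁ b₁) (hb : b₁ ≤ b) (hne : ∃ a, R a b) :
    c4 R a₁ b := by
  obtain ⟨hb0, hlt, ⟨a₀, ha₀⟩, hfar⟩ := h
  refine ⟨hb0, fun b' hb' => lt_of_lt_of_le (hlt b' hb') hb, hne, fun a' ha' => ?_⟩
  by_contra hcon
  push_neg at hcon
  have hJ : IsInterval {y : B | b₁ ≤ y} := fun x y z hx _ hxy _ => le_trans hx hxy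
  obtain ⟨y, hy, hRy⟩ := hR.2 {y : B | b₁ ≤ y} hJ a₀ a₁ a'
    ⟨b₁, le_refl _, ha₀⟩ ⟨b, hb, ha'⟩ hb0 (le_of_lt (hfar a₀ ha₀)) hcon
  exact absurd hy (not_le.mpr (hlt y hRy))
end

section
/- Let (A, ≤_A) and (B, ≤_B) be linear orders and let R ⊆ A × B be an interval-preserving relation. If R(a) ≠ ∅, R⁻¹(b) ≠ ∅, and (a,b) ∉ R, then either b < R(a), or R(a) < b, or a < R⁻¹(b), or R⁻¹(b) < a; in particular (a,b) belongs to c1(R) ∪ c2(R) ∪ c3(R) ∪ c4(R). -/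
theorem not_rel_cases {A B : Type*} [LinearOrder A] [LinearOrder B]
    (R : A → B → Prop) (hR : IntervalPreserving R) (a : A) (b : B)
    (ha : ∃ b', R a b') (hb : ∃ a', R a' b) (hnR : ¬ R a b) :
    ((∀ b', R a b' → b < b') ∨ (∀ b', R a b' → b' < b) ∨
     (∀ a', R a' b → a < a') ∨ (∀ a', R a' b → a' < a)) ∧
    (c1 R a b ∨ c2 R a b ∨ c3 R a b ∨ c4 R a b) := by
  have hIa : IsInterval ({a} : Set A) := by
    intro x y z hx hz hxy hyz
    simp only [Set.mem_singleton_iff] at *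
    subst hx; subst hz; exact le_antisymm hyz hxy
  have hIb : IsInterval ({b} : Set B) := by
    intro x y z hx hz hxy hyz
    simp only [Set.mem_singleton_iff] at *
    subst hx; subst hz; exact le_antisymm hyz hxy
  have hBside : (∀ b', R a b' → b < b') ∨ (∀ b', R a b' → b' < b) := by
    by_contra h
    push_neg at h
    obtain ⟨⟨b1, hb1, hb1le⟩, ⟨b2, hb2, hb2le⟩⟩ := h
    obtain ⟨a', ha', hR'⟩ := hR.1 {a} hIa b1 b b2 ⟨a, rfl, hb1⟩ ⟨a, rfl, hb2⟩ hb hb1le hb2le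
    exact hnR (by rwa [Set.mem_singleton_iff.mp ha'] at hR')
  have hAside : (∀ a', R a' b → a < a') ∨ (∀ a', R a' b → a' < a) := by
    by_contra h
    push_neg at h
    obtain ⟨⟨a1, ha1, ha1le⟩, ⟨a2, ha2, ha2le⟩⟩ := h
    obtain ⟨b', hb', hR'⟩ := hR.2 {b} hIb a1 a a2 ⟨b, rfl, ha1⟩ ⟨b, rfl, ha2⟩ ha ha1le ha2le
    exact hnR (by rwa [Set.mem_singleton_iff.mp hb'] at hR')
  refine ⟨?_, ?_⟩
  · rcases hBside with h | h
    · exact Or.inl h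
    · exact Or.inr (Or.inl h)
  · rcases hBside with hB | hB <;> rcases hAside with hA | hA
    · exact Or.inl ⟨ha, hB, hb, hA⟩
    · exact Or.inr (Or.inl ⟨ha, hB, hb, hA⟩)
    · exact Or.inr (Or.inr (Or.inl ⟨ha, hB, hb, hA⟩))
    · exact Or.inr (Or.inr (Or.inr ⟨ha, hB, hb, hA⟩))
end
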